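/- arXiv:2011.09758 — 4 statements merged into one kernel-verified Lean document; each statement's English description precedes it below -/
import Mathlib

section
/- Let U be a submodular universe, k ∈ ℕ, and 𝒫 a set of regular profiles of S_k. Then S_k is F_e-separable, where F_e is the set of all stars σ ⊆ S_k included in at most one profile in 𝒫 and satisfying Eff(P) whenever included in some P ∈ 𝒫. -/
namespace SepDemo

/-- A universe of separations: a finite lattice with an order-reversing involution. -/
structure SepUniverse (U : Type*) [Lattice U] [Fintype U] where
  inv : U → U
  inv_inv : ∀ s, inv (inv s) = s
  le_iff : ∀ r s : U, r ≤ s ↔ inv s ≤ inv r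

/-- A submodular universe: a universe with a submodular order function. -/
structure SubmodUniverse (U : Type*) [Lattice U] [Fintype U] extends SepUniverse U where
  ord : U → ℕ
  ord_inv : ∀ s, ord (inv s) = ord s
  submod : ∀ s t : U, ord (s ⊔ t) + ord (s ⊓ t) ≤ ord s + ord t

variable {U : Type*} [Lattice U] [Fintype U]

/-- A separation system inside a universe: a subset closed under the involution. -/
def SepSystem (𝒰 : SepUniverse U) (S : Set U) : Prop :=
  ∀ s ∈ S, 𝒰.inv s ∈ S

/-- An orientation of `S`: contains, for each `s ∈ S`, exactly one of `s`, `s*`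
(just `s` itself if `s` is degenerate). -/
def IsOrientation (𝒰 : SepUniverse U) (S O : Set U) : Prop :=
  O ⊆ S ∧ ∀ s ∈ S, (s ∈ O ∨ 𝒰.inv s ∈ O) ∧ (s ∈ O → 𝒰.inv s ∈ O → s = 𝒰.inv s)

/-- Consistency: no `r, s ∈ O` with `{r,r*} ≠ {s,s*}` and `r* ≤ s`. -/
def Consistent (𝒰 : SepUniverse U) (O : Set U) : Prop :=
  ∀ r ∈ O, ∀ s ∈ O, ({r, 𝒰.inv r} : Set U) ≠ ({s, 𝒰.inv s} : Set U) → ¬ 𝒰.inv r ≤ s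

/-- A profile of `S`: a consistent orientation satisfying the profile property. -/
def IsProfile (𝒰 : SepUniverse U) (S P : Set U) : Prop :=
  IsOrientation 𝒰 S P ∧ Consistent 𝒰 P ∧ ∀ r ∈ P, ∀ s ∈ P, 𝒰.inv (r ⊔ s) ∉ P

/-- Regular: contains no cosmall separation. -/
def Regular (𝒰 : SepUniverse U) (P : Set U) : Prop :=
  ∀ s ∈ P, ¬ 𝒰.inv s ≤ s

/-- Two separations are nested. -/
def Nested (𝒰 : SepUniverse U) (r s : U) : Prop :=
  r ≤ s ∨ r ≤ 𝒰.inv s ∨ 𝒰.inv r ≤ s ∨ 𝒰.inv r ≤ 𝒰.inv s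

/-- A set of separations is nested if its members are pairwise nested. -/
def NestedSet (𝒰 : SepUniverse U) (N : Set U) : Prop :=
  ∀ r ∈ N, ∀ s ∈ N, Nested 𝒰 r s

/-- `s` distinguishes the orientations `O₁` and `O₂`. -/
def Distinguishes (𝒰 : SepUniverse U) (s : U) (O₁ O₂ : Set U) : Prop :=
  (s ∈ O₁ ∧ 𝒰.inv s ∈ O₂) ∨ (𝒰.inv s ∈ O₁ ∧ s ∈ O₂)

/-- Two orientations are distinguishable. -/
def Distinguishable (𝒰 : SepUniverse U) (P Q : Set U) : Prop :=
  ∃ s : U, Distinguishes 𝒰 s P Q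

/-- Structural submodularity of a separation system. -/
def StructSubmodular (S : Set U) : Prop :=
  ∀ s ∈ S, ∀ t ∈ S, s ⊔ t ∈ S ∨ s ⊓ t ∈ S

/-- `s` is trivial in `S`. -/
def IsTrivialIn (𝒰 : SepUniverse U) (S : Set U) (s : U) : Prop :=
  ∃ r ∈ S, ({r, 𝒰.inv r} : Set U) ≠ ({s, 𝒰.inv s} : Set U) ∧ s ≤ r ∧ s ≤ 𝒰.inv r

/-- A star of separations. -/
def IsStar (𝒰 : SepUniverse U) (σ : Set U) : Prop :=
  ∀ r ∈ σ, ∀ s ∈ σ, r ≠ s → r ≤ 𝒰.inv s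

/-- The shift `σ_x^{s₀}` of a star `σ` at `x ∈ σ` to `s₀`. -/
def shiftStar (𝒰 : SepUniverse U) (σ : Set U) (x s₀ : U) : Set U :=
  insert (x ⊔ s₀) ((fun y => y ⊓ 𝒰.inv s₀) '' (σ \ {x}))

/-- `s₀` emulates `r` in `S`. -/
def Emulates (𝒰 : SepUniverse U) (S : Set U) (s₀ r : U) : Prop :=
  r ≤ s₀ ∧ ∀ t ∈ S, t ≠ 𝒰.inv r → r ≤ t → t ⊔ s₀ ∈ S

/-- `s₀` emulates `r` in `S` for a set `F` of stars. -/
def EmulatesFor (𝒰 : SepUniverse U) (S : Set U) (F : Set (Set U)) (s₀ r : U) : Prop :=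
  Emulates 𝒰 S s₀ r ∧
    ∀ σ ∈ F, 𝒰.inv r ∉ σ → ∀ x ∈ σ, r ≤ x → shiftStar 𝒰 σ x s₀ ∈ F

/-- `F` forces `s`. -/
def Forces (𝒰 : SepUniverse U) (F : Set (Set U)) (s : U) : Prop :=
  ({𝒰.inv s} : Set U) ∈ F

/-- `S` is `F`-separable. -/
def FSeparable (𝒰 : SepUniverse U) (S : Set U) (F : Set (Set U)) : Prop :=
  ∀ r₁ ∈ S, ∀ r₂ ∈ S,
    ¬ IsTrivialIn 𝒰 S r₁ → ¬ IsTrivialIn 𝒰 S r₂ →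
    r₁ ≠ 𝒰.inv r₁ → r₂ ≠ 𝒰.inv r₂ →
    ¬ Forces 𝒰 F r₁ → ¬ Forces 𝒰 F r₂ →
    r₁ ≤ 𝒰.inv r₂ →
    ∃ s₀ ∈ S, r₁ ≤ s₀ ∧ s₀ ≤ 𝒰.inv r₂ ∧
      EmulatesFor 𝒰 S F s₀ r₁ ∧ EmulatesFor 𝒰 S F (𝒰.inv s₀) r₂

/-- `r` is `F`-critical. -/
def FCritical (𝒰 : SepUniverse U) (F : Set (Set U)) (r : U) : Prop :=
  (∃ σ ∈ F, r ∈ σ) ∧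
    ¬ ∃ σ' ∈ F, σ' ∩ ({r, 𝒰.inv r} : Set U) = ({𝒰.inv r} : Set U)

/-- `S` is critically `F`-separable. -/
def CritFSeparable (𝒰 : SepUniverse U) (S : Set U) (F : Set (Set U)) : Prop :=
  ∀ r₁ ∈ S, ∀ r₂ ∈ S, FCritical 𝒰 F r₁ → FCritical 𝒰 F r₂ → r₁ ≤ 𝒰.inv r₂ →
    ∃ s₀ ∈ S, EmulatesFor 𝒰 S F s₀ r₁ ∧ EmulatesFor 𝒰 S F (𝒰.inv s₀) r₂

/-- An `F`-tangle of `S`: a consistent orientation including no member of `F`. -/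
def FTangle (𝒰 : SepUniverse U) (S : Set U) (F : Set (Set U)) (O : Set U) : Prop :=
  IsOrientation 𝒰 S O ∧ Consistent 𝒰 O ∧ ∀ σ ∈ F, ¬ σ ⊆ O

/-- `F` is standard for `S`: it forces all trivial separations of `S`. -/
def StandardFor (𝒰 : SepUniverse U) (S : Set U) (F : Set (Set U)) : Prop :=
  ∀ r ∈ S, IsTrivialIn 𝒰 S r → ({𝒰.inv r} : Set U) ∈ F

/-- An `S`-tree: a finite tree together with edge labels in `S` commuting with
the involution. -/
structure STree (𝒰 : SepUniverse U) (S : Set U) where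
  V : Type
  fintypeV : Fintype V
  G : SimpleGraph V
  isTree : G.IsTree
  label : V → V → U
  label_mem : ∀ x y, G.Adj x y → label x y ∈ S
  label_inv : ∀ x y, G.Adj x y → label y x = 𝒰.inv (label x y)

namespace STree

variable {𝒰 : SepUniverse U} {S : Set U}

/-- The star `α(t)` associated with a node `t`. -/
def nodeStar (T : STree 𝒰 S) (t : T.V) : Set U :=
  {u | ∃ s, T.G.Adj s t ∧ T.label s t = u}

/-- The `S`-tree is over `F`. -/
def Over (T : STree 𝒰 S) (F : Set (Set U)) : Prop :=
  ∀ t : T.V, T.nodeStar t ∈ F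

/-- Irredundance of an `S`-tree. -/
def Irredundant (T : STree 𝒰 S) : Prop :=
  ∀ t t' t'' : T.V, T.G.Adj t' t → T.G.Adj t'' t → t' ≠ t'' →
    T.label t' t ≠ T.label t'' t

/-- The set of edge labels of the tree. -/
def labels (T : STree 𝒰 S) : Set U :=
  {u | ∃ x y, T.G.Adj x y ∧ T.label x y = u}

/-- `t` is a sink of the orientation of the tree induced by `P`. -/
def IsSinkOf (T : STree 𝒰 S) (P : Set U) (t : T.V) : Prop :=
  ∀ s, T.G.Adj s t → T.label s t ∈ P

/-- The degree of a node. -/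
noncomputable def deg (T : STree 𝒰 S) (t : T.V) : ℕ :=
  (T.G.neighborSet t).ncard

/-- The maximum degree of the tree. -/
noncomputable def maxDeg (T : STree 𝒰 S) : ℕ :=
  sSup {n | ∃ t : T.V, T.deg t = n}

end STree

/-- A tree of tangles for `S`: an irredundant `S`-tree whose edge labels
distinguish every two distinct regular profiles of `S`. -/
def TreeOfTangles (𝒰 : SepUniverse U) (S : Set U) (T : STree 𝒰 S) : Prop :=
  T.Irredundant ∧
    ∀ P Q : Set U, IsProfile 𝒰 S P → Regular 𝒰 P → IsProfile 𝒰 S Q → Regular 𝒰 Q →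
      P ≠ Q → ∃ s ∈ T.labels, Distinguishes 𝒰 s P Q

/-- `δ(P)`: the minimum size of a subset of `P` distinguishing `P` from every
other regular profile of `S`. -/
noncomputable def deltaP (𝒰 : SepUniverse U) (S P : Set U) : ℕ :=
  sInf {n | ∃ D : Set U, D ⊆ P ∧ D.ncard = n ∧
    ∀ Q : Set U, IsProfile 𝒰 S Q → Regular 𝒰 Q → Q ≠ P →
      ∃ s ∈ D, Distinguishes 𝒰 s P Q}

/-- `S_k`: the separations of order less than `k`. -/
def Sk (𝒱 : SubmodUniverse U) (k : ℕ) : Set U := {s | 𝒱.ord s < k}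

/-- `s` distinguishes `P` and `Q` efficiently. -/
def EffDistinguishes (𝒱 : SubmodUniverse U) (s : U) (P Q : Set U) : Prop :=
  Distinguishes 𝒱.toSepUniverse s P Q ∧
    ∀ t : U, Distinguishes 𝒱.toSepUniverse t P Q → 𝒱.ord s ≤ 𝒱.ord t

/-- Property `Eff(P)` of a star `σ`. -/
def EffProp (𝒱 : SubmodUniverse U) (σ P : Set U) : Prop :=
  ¬ ∃ s ∈ σ, ∃ s' ∈ P, s ≤ s' ∧ 𝒱.ord s' < 𝒱.ord s

/-- `s` is a splice for `r`. -/
def SpliceFor (𝒱 : SubmodUniverse U) (s r : U) : Prop :=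
  r ≤ s ∧ ¬ ∃ t : U, r ≤ t ∧ t ≤ s ∧ 𝒱.ord t < 𝒱.ord s

/-- `s` is a splice between `r₁` and `r₂`. -/
def SpliceBetween (𝒱 : SubmodUniverse U) (s r₁ r₂ : U) : Prop :=
  r₁ ≤ s ∧ s ≤ r₂ ∧ ∀ t : U, r₁ ≤ t → t ≤ r₂ → 𝒱.ord s ≤ 𝒱.ord t

/-- The set `F_e` of stars in `S_k` included in at most one profile of `𝔓` and
satisfying `Eff(P)` whenever included in `P ∈ 𝔓`. -/
def Fe (𝒱 : SubmodUniverse U) (k : ℕ) (𝔓 : Set (Set U)) : Set (Set U) :=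
  {σ | σ ⊆ Sk 𝒱 k ∧ IsStar 𝒱.toSepUniverse σ ∧
    (∀ P ∈ 𝔓, ∀ Q ∈ 𝔓, σ ⊆ P → σ ⊆ Q → P = Q) ∧
    (∀ P ∈ 𝔓, σ ⊆ P → EffProp 𝒱 σ P)}

/-- `δ_e(P)`: the minimum size of a star `σ ⊆ P` with `Eff(P)` such that every
other regular profile of `S_k` contains the inverse of some element of `σ`. -/
noncomputable def deltaE (𝒱 : SubmodUniverse U) (k : ℕ) (P : Set U) : ℕ :=
  sInf {n | ∃ σ : Set U, σ ⊆ P ∧ IsStar 𝒱.toSepUniverse σ ∧ EffProp 𝒱 σ P ∧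
    σ.ncard = n ∧
    ∀ Q : Set U, IsProfile 𝒱.toSepUniverse (Sk 𝒱 k) Q → Regular 𝒱.toSepUniverse Q →
      Q ≠ P → ∃ s ∈ σ, 𝒱.inv s ∈ Q}

/-- `δ_{e,max}`: maximum of `δ_e` over all regular profiles of `S_k`. -/
noncomputable def deltaEMax (𝒱 : SubmodUniverse U) (k : ℕ) : ℕ :=
  sSup {n | ∃ P : Set U, IsProfile 𝒱.toSepUniverse (Sk 𝒱 k) P ∧
    Regular 𝒱.toSepUniverse P ∧ deltaE 𝒱 k P = n}

/-- `P` is a profile in `U`: a `k`-profile for some `k`. -/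
def ProfileIn (𝒱 : SubmodUniverse U) (P : Set U) : Prop :=
  ∃ k : ℕ, IsProfile 𝒱.toSepUniverse (Sk 𝒱 k) P

/-- Strong robustness of a profile. -/
def StronglyRobust (𝒱 : SubmodUniverse U) (P : Set U) : Prop :=
  ∀ s ∈ P, ∀ r : U, 𝒱.ord (s ⊔ r) ≤ 𝒱.ord s → 𝒱.ord (s ⊔ 𝒱.inv r) ≤ 𝒱.ord s →
    (s ⊔ r ∈ P ∨ s ⊔ 𝒱.inv r ∈ P)

/-- `O` weakly orients a separation as `s'` if `s' ≤ r` for some `r ∈ O`. -/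
def WeaklyOrientsAs (O : Set U) (s' : U) : Prop :=
  ∃ r ∈ O, s' ≤ r

/-- `O` weakly orients `s` (as `s` or as `s*`). -/
def WeaklyOrients (𝒰 : SepUniverse U) (O : Set U) (s : U) : Prop :=
  WeaklyOrientsAs O s ∨ WeaklyOrientsAs O (𝒰.inv s)

/-- The set `F_d` of stars, relative to the set of profiles `𝔓`. -/
def Fd (𝒱 : SubmodUniverse U) (𝔓 : Set (Set U)) : Set (Set U) :=
  {σ | IsStar 𝒱.toSepUniverse σ ∧
    (∀ P ∈ 𝔓, ∀ Q ∈ 𝔓, σ ⊆ P → σ ⊆ Q → P = Q) ∧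
    (∀ P ∈ 𝔓, ¬ σ ⊆ P → ∃ s ∈ σ, WeaklyOrientsAs P (𝒱.inv s)) ∧
    (∀ P ∈ 𝔓, σ ⊆ P → EffProp 𝒱 σ P)}
private lemma inv_le_inv' (𝒰 : SepUniverse U) {a b : U} (h : a ≤ b) :
    𝒰.inv b ≤ 𝒰.inv a := (𝒰.le_iff a b).1 h

private lemma le_inv_of_le_inv (𝒰 : SepUniverse U) {a b : U} (h : a ≤ 𝒰.inv b) :
    b ≤ 𝒰.inv a := by
  have := inv_le_inv' 𝒰 h
  rwa [𝒰.inv_inv] at this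

private lemma inv_sup' (𝒰 : SepUniverse U) (a b : U) :
    𝒰.inv (a ⊔ b) = 𝒰.inv a ⊓ 𝒰.inv b := by
  apply le_antisymm
  · exact le_inf (inv_le_inv' 𝒰 le_sup_left) (inv_le_inv' 𝒰 le_sup_right)
  · have h1 : a ≤ 𝒰.inv (𝒰.inv a ⊓ 𝒰.inv b) := le_inv_of_le_inv 𝒰 inf_le_left
    have h2 : b ≤ 𝒰.inv (𝒰.inv a ⊓ 𝒰.inv b) := le_inv_of_le_inv 𝒰 inf_le_right
    have := inv_le_inv' 𝒰 (sup_le h1 h2)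
    rwa [𝒰.inv_inv] at this

private lemma inv_inf' (𝒰 : SepUniverse U) (a b : U) :
    𝒰.inv (a ⊓ b) = 𝒰.inv a ⊔ 𝒰.inv b := by
  have := inv_sup' 𝒰 (𝒰.inv a) (𝒰.inv b)
  rw [𝒰.inv_inv, 𝒰.inv_inv] at this
  rw [← this, 𝒰.inv_inv]

/-- The key lemma: if `s₀` has minimum order among all separations between `r`
and `b`, then `s₀` emulates `r` in `S_k` for `F_e`. -/
private lemma emulatesFor_of_min (𝒱 : SubmodUniverse U) (k : ℕ) (𝔓 : Set (Set U))
    (h𝔓 : ∀ P ∈ 𝔓, IsProfile 𝒱.toSepUniverse (Sk 𝒱 k) P ∧ Regular 𝒱.toSepUniverse P)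
    {r b s₀ : U} (hrs : r ≤ s₀) (hsb : s₀ ≤ b)
    (hmin : ∀ t : U, r ≤ t → t ≤ b → 𝒱.ord s₀ ≤ 𝒱.ord t) :
    EmulatesFor 𝒱.toSepUniverse (Sk 𝒱 k) (Fe 𝒱 k 𝔓) s₀ r := by
  set 𝒰 := 𝒱.toSepUniverse with h𝒰
  -- basic order facts from submodularity and minimality of s₀
  have hsup_le : ∀ t : U, r ≤ t → 𝒱.ord (t ⊔ s₀) ≤ 𝒱.ord t := by
    intro t hrt
    have h1 : 𝒱.ord s₀ ≤ 𝒱.ord (t ⊓ s₀) := hmin _ (le_inf hrt hrs) (inf_le_right.trans hsb)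
    have h2 := 𝒱.submod t s₀
    omega
  have hinf_le : ∀ y : U, r ≤ 𝒰.inv y → 𝒱.ord (y ⊓ 𝒰.inv s₀) ≤ 𝒱.ord y := by
    intro y hry
    have heq : 𝒰.inv (y ⊔ 𝒰.inv s₀) = 𝒰.inv y ⊓ s₀ := by
      rw [inv_sup', 𝒰.inv_inv]
    have h0 : 𝒱.ord s₀ ≤ 𝒱.ord (y ⊔ 𝒰.inv s₀) := by
      have h1 := hmin (𝒰.inv y ⊓ s₀) (le_inf hry hrs) (inf_le_right.trans hsb)
      rw [← heq] at h1
      rwa [𝒱.ord_inv] at h1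
    have h2 := 𝒱.submod y (𝒰.inv s₀)
    rw [show 𝒱.ord (𝒰.inv s₀) = 𝒱.ord s₀ from 𝒱.ord_inv s₀] at h2
    omega
  constructor
  · -- Emulates
    refine ⟨hrs, ?_⟩
    intro t ht _ hrt
    have ht' : 𝒱.ord t < k := ht
    show 𝒱.ord (t ⊔ s₀) < k
    exact lt_of_le_of_lt (hsup_le t hrt) ht'
  · -- shifting stars
    intro σ hσ hinvr x hxσ hrx
    obtain ⟨hσS, hσstar, hσuniq, hσeff⟩ := hσ
    have hyfacts : ∀ y ∈ σ \ {x}, y ≤ 𝒰.inv x ∧ r ≤ 𝒰.inv y := by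
      intro y hy
      have hyx : y ≠ x := hy.2
      have h1 : y ≤ 𝒰.inv x := hσstar y hy.1 x hxσ hyx
      have h2 : r ≤ 𝒰.inv y := by
        have : y ≤ 𝒰.inv r := h1.trans (inv_le_inv' 𝒰 hrx)
        exact le_inv_of_le_inv 𝒰 this
      exact ⟨h1, h2⟩
    -- containment of the shifted star in a profile implies containment of σ
    have hsub : ∀ P ∈ 𝔓, shiftStar 𝒰 σ x s₀ ⊆ P → σ ⊆ P := by
      intro P hP hsP z hz
      obtain ⟨⟨⟨hPS, hor⟩, hcons, hprof⟩, hreg⟩ := h𝔓 P hP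
      have hxsP : x ⊔ s₀ ∈ P := hsP (Set.mem_insert _ _)
      by_cases hzx : z = x
      · subst hzx
        rcases (hor z (hσS hz)).1 with h | h
        · exact h
        · by_cases heq : ({𝒰.inv z, 𝒰.inv (𝒰.inv z)} : Set U)
              = ({z ⊔ s₀, 𝒰.inv (z ⊔ s₀)} : Set U)
          · rw [𝒰.inv_inv] at heq
            have hmem : 𝒰.inv z ∈ ({z ⊔ s₀, 𝒰.inv (z ⊔ s₀)} : Set U) :=
              heq ▸ Set.mem_insert _ _
            rcases hmem with h1 | h1
            · exfalso
              apply hreg (z ⊔ s₀) hxsP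
              have hzz : 𝒰.inv (z ⊔ s₀) = z := by rw [← h1, 𝒰.inv_inv]
              rw [hzz]
              exact le_sup_left
            · have h1' : 𝒰.inv z = 𝒰.inv (z ⊔ s₀) := h1
              have := congrArg 𝒰.inv h1'
              rw [𝒰.inv_inv, 𝒰.inv_inv] at this
              rw [this]
              exact hxsP
          · exfalso
            have := hcons (𝒰.inv z) h (z ⊔ s₀) hxsP heq
            rw [𝒰.inv_inv] at this
            exact this le_sup_left
      · have hzmem : z ∈ σ \ {x} := ⟨hz, by simpa using hzx⟩
        have hy := hyfacts z hzmem
        have hzsP : z ⊓ 𝒰.inv s₀ ∈ P :=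
          hsP (Set.mem_insert_of_mem _ ⟨z, hzmem, rfl⟩)
        rcases (hor z (hσS hz)).1 with h | h
        · exact h
        · exfalso
          have hnp := hprof (𝒰.inv z) h (x ⊔ s₀) hxsP
          apply hnp
          have hcalc : 𝒰.inv (𝒰.inv z ⊔ (x ⊔ s₀)) = z ⊓ 𝒰.inv s₀ := by
            rw [inv_sup', 𝒰.inv_inv, inv_sup', ← inf_assoc, inf_eq_left.mpr hy.1]
          rw [hcalc]
          exact hzsP
    refine ⟨?_, ?_, ?_, ?_⟩
    · -- shifted star ⊆ S_k
      intro u hu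
      simp only [shiftStar, Set.mem_insert_iff, Set.mem_image] at hu
      rcases hu with rfl | ⟨y, hy, rfl⟩
      · have hx' : 𝒱.ord x < k := hσS hxσ
        show 𝒱.ord (x ⊔ s₀) < k
        exact lt_of_le_of_lt (hsup_le x hrx) hx'
      · have hy' : 𝒱.ord y < k := hσS hy.1
        show 𝒱.ord (y ⊓ 𝒰.inv s₀) < k
        exact lt_of_le_of_lt (hinf_le y (hyfacts y hy).2) hy'
    · -- shifted star is a star
      intro u hu v hv huv
      simp only [shiftStar, Set.mem_insert_iff, Set.mem_image] at hu hv
      rcases hu with rfl | ⟨y, hy, rfl⟩ <;> rcases hv with rfl | ⟨z, hz, rfl⟩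
      · exact absurd rfl huv
      · rw [inv_inf', 𝒰.inv_inv]
        have hxz : x ≤ 𝒰.inv z := le_inv_of_le_inv 𝒰 (hyfacts z hz).1
        exact sup_le (hxz.trans le_sup_left) le_sup_right
      · rw [inv_sup']
        exact le_inf (inf_le_left.trans (hyfacts y hy).1) inf_le_right
      · rw [inv_inf', 𝒰.inv_inv]
        have hyz : y ≠ z := by rintro rfl; exact huv rfl
        have : y ≤ 𝒰.inv z := hσstar y hy.1 z hz.1 hyz
        exact inf_le_left.trans (this.trans le_sup_left)
    · -- at most one profile contains the shifted star
      intro P hP Q hQ h1 h2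
      exact hσuniq P hP Q hQ (hsub P hP h1) (hsub Q hQ h2)
    · -- Eff(P) for the shifted star
      intro P hP hsP
      have hσP := hsub P hP hsP
      have heff := hσeff P hP hσP
      obtain ⟨⟨⟨hPS, hor⟩, hcons, hprof⟩, hreg⟩ := h𝔓 P hP
      rintro ⟨s, hs, s', hs'P, hle, hord⟩
      simp only [shiftStar, Set.mem_insert_iff, Set.mem_image] at hs
      rcases hs with rfl | ⟨y, hy, rfl⟩
      · exact heff ⟨x, hxσ, s', hs'P, le_sup_left.trans hle,
          lt_of_lt_of_le hord (hsup_le x hrx)⟩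
      · have hyf := hyfacts y hy
        have hkey : 𝒱.ord (y ⊓ 𝒰.inv s₀) ≤ 𝒱.ord (y ⊓ s') := by
          have h1 : r ≤ 𝒰.inv (y ⊓ s') := by
            rw [inv_inf']
            exact hyf.2.trans le_sup_left
          have h2 := hinf_le (y ⊓ s') h1
          have h3 : (y ⊓ s') ⊓ 𝒰.inv s₀ = y ⊓ 𝒰.inv s₀ := by
            apply le_antisymm
            · exact le_inf (inf_le_left.trans inf_le_left) inf_le_right
            · exact le_inf (le_inf inf_le_left hle) inf_le_right
          rwa [h3] at h2
        have hsub2 := 𝒱.submod y s'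
        have hlt : 𝒱.ord (y ⊔ s') < 𝒱.ord y := by omega
        have hySk : 𝒱.ord y < k := hσS hy.1
        have hmemSk : y ⊔ s' ∈ Sk 𝒱 k := show 𝒱.ord (y ⊔ s') < k from lt_trans hlt hySk
        have hyP : y ∈ P := hσP hy.1
        rcases (hor (y ⊔ s') hmemSk).1 with hP1 | hP1
        · exact heff ⟨y, hy.1, y ⊔ s', hP1, le_sup_left, hlt⟩
        · exact hprof y hyP s' hs'P hP1

/-- For a set `𝔓` of regular profiles of `S_k` in a submodular
universe, `S_k` is `F_e`-separable. -/
theorem Fe_separable (𝒱 : SubmodUniverse U) (k : ℕ) (𝔓 : Set (Set U))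
    (h𝔓 : ∀ P ∈ 𝔓, IsProfile 𝒱.toSepUniverse (Sk 𝒱 k) P ∧ Regular 𝒱.toSepUniverse P) :
    FSeparable 𝒱.toSepUniverse (Sk 𝒱 k) (Fe 𝒱 k 𝔓) := by
  classical
  intro r₁ hr₁ r₂ hr₂ _ _ _ _ _ _ h12
  obtain ⟨s₀, hs₀mem, hs₀min⟩ :=
    Finset.exists_min_image
      (Finset.univ.filter fun s => r₁ ≤ s ∧ s ≤ 𝒱.inv r₂) 𝒱.ord
      ⟨r₁, by simp [h12]⟩
  simp only [Finset.mem_filter, Finset.mem_univ, true_and] at hs₀mem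
  have hmin : ∀ t : U, r₁ ≤ t → t ≤ 𝒱.inv r₂ → 𝒱.ord s₀ ≤ 𝒱.ord t := by
    intro t h1 h2
    exact hs₀min t (by simp [h1, h2])
  have hr₁' : 𝒱.ord r₁ < k := hr₁
  refine ⟨s₀, ?_, hs₀mem.1, hs₀mem.2, ?_, ?_⟩
  · show 𝒱.ord s₀ < k
    exact lt_of_le_of_lt (hmin r₁ le_rfl h12) hr₁'
  · exact emulatesFor_of_min 𝒱 k 𝔓 h𝔓 hs₀mem.1 hs₀mem.2 hmin
  · have h1 : r₂ ≤ 𝒱.inv s₀ := le_inv_of_le_inv _ hs₀mem.2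
    have h2 : 𝒱.inv s₀ ≤ 𝒱.inv r₁ := inv_le_inv' _ hs₀mem.1
    have hmin2 : ∀ t : U, r₂ ≤ t → t ≤ 𝒱.inv r₁ → 𝒱.ord (𝒱.inv s₀) ≤ 𝒱.ord t := by
      intro t ht1 ht2
      have ha : r₁ ≤ 𝒱.inv t := le_inv_of_le_inv _ ht2
      have hb : 𝒱.inv t ≤ 𝒱.inv r₂ := inv_le_inv' _ ht1
      have := hmin (𝒱.inv t) ha hb
      rw [𝒱.ord_inv]
      rwa [𝒱.ord_inv] at this
    exact emulatesFor_of_min 𝒱 k 𝔓 h𝔓 h1 h2 hmin2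

end SepDemo
end

section
/- Let U be a submodular universe, k ∈ ℕ, and 𝒫 a set of regular profiles of S_k. Then every profile P ∈ 𝒫 includes a star σ ⊆ P belonging to F_e; that is, a star σ ⊆ P with property Eff(P) that is included in no profile in 𝒫 other than P. -/
/-!
Among the finite subsets of `P` that lie in no other profile of `𝔓` (`P` itself is one), take
one, `σ`, of least total weight, a separation being weighed by its order and, to break ties, by
its height in the lattice. Regular profiles are down-closed in `S_k`. Hence if `t ∈ σ` lies below
some `t' ∈ P` of smaller order, swapping `t` for `t'` keeps `σ` out of the other profiles. If two
elements `r, s` of `σ` cross, submodularity lets us replace one of them, say `s`, by the corner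
`s ⊓ r*`, which is strictly lower and of no larger order: it lies in `P` by down-closure, and a
profile containing `r` but not `s` avoids it by the profile property. Both swaps would lower the
weight, so `σ` is a star with `Eff(P)`.
-/

namespace SepDemo

variable {U : Type*} [Lattice U] [Fintype U]

namespace SepUniverse

variable (𝒰 : SepUniverse U)

theorem le_inv_comm {a b : U} : a ≤ 𝒰.inv b ↔ b ≤ 𝒰.inv a := by
  rw [𝒰.le_iff, 𝒰.inv_inv]

theorem inv_sup (a b : U) : 𝒰.inv (a ⊔ b) = 𝒰.inv a ⊓ 𝒰.inv b := by
  refine le_antisymm (le_inf ((𝒰.le_iff _ _).1 le_sup_left) ((𝒰.le_iff _ _).1 le_sup_right)) ?_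
  rw [← 𝒰.le_inv_comm]
  exact sup_le (𝒰.le_inv_comm.1 inf_le_left) (𝒰.le_inv_comm.1 inf_le_right)

end SepUniverse

section Orientations

variable {𝒰 : SepUniverse U} {S O P Q : Set U}

theorem IsOrientation.inv_mem (hO : IsOrientation 𝒰 S O) {s : U} (hs : s ∈ S) (hsO : s ∉ O) :
    𝒰.inv s ∈ O :=
  ((hO.2 s hs).1).resolve_left hsO

theorem IsOrientation.eq_of_subset (hP : IsOrientation 𝒰 S P) (hQ : IsOrientation 𝒰 S Q)
    (hPQ : P ⊆ Q) : P = Q := by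
  refine hPQ.antisymm fun t htQ => ?_
  have htS : t ∈ S := hQ.1 htQ
  by_contra htP
  have hinvP := hP.inv_mem htS htP
  exact htP ((hQ.2 t htS).2 htQ (hPQ hinvP) ▸ hinvP)

theorem IsOrientation.mem_of_le (hO : IsOrientation 𝒰 S O) (hcons : Consistent 𝒰 O)
    (hreg : Regular 𝒰 O) {s u : U} (hs : s ∈ O) (hus : u ≤ s) (hu : u ∈ S) : u ∈ O := by
  by_contra huO
  have hinv := hO.inv_mem hu huO
  by_cases hpair : ({𝒰.inv u, 𝒰.inv (𝒰.inv u)} : Set U) = {s, 𝒰.inv s}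
  · rw [𝒰.inv_inv, Set.pair_comm] at hpair
    rcases (Set.pair_eq_pair_iff.1 hpair) with ⟨rfl, -⟩ | ⟨rfl, -⟩
    · exact huO hs
    · exact hreg _ hs hus
  · exact hcons _ hinv s hs hpair (by rwa [𝒰.inv_inv])

theorem IsProfile.inf_inv_notMem (hQ : IsProfile 𝒰 S Q) {r s : U} (hs : s ∈ S) (hsQ : s ∉ Q)
    (hr : r ∈ Q) : s ⊓ 𝒰.inv r ∉ Q := by
  simpa only [𝒰.inv_sup, 𝒰.inv_inv] using hQ.2.2 _ (hQ.1.inv_mem hs hsQ) r hr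

end Orientations

namespace SubmodUniverse

variable (𝒱 : SubmodUniverse U)

theorem ord_inf_inv_le_or (r s : U) :
    𝒱.ord (s ⊓ 𝒱.inv r) ≤ 𝒱.ord s ∨ 𝒱.ord (r ⊓ 𝒱.inv s) ≤ 𝒱.ord r := by
  have hsub := 𝒱.submod s (𝒱.inv r)
  have hsup : 𝒱.ord (s ⊔ 𝒱.inv r) = 𝒱.ord (r ⊓ 𝒱.inv s) := by
    rw [← 𝒱.ord_inv, 𝒱.inv_sup, 𝒱.inv_inv, inf_comm]
  rw [hsup, 𝒱.ord_inv] at hsub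
  omega

/-- Lexicographic in (order, height): the height `(Set.Iic s).ncard` never exceeds `Nat.card U`. -/
noncomputable def weight (s : U) : ℕ :=
  𝒱.ord s * (Nat.card U + 1) + (Set.Iic s).ncard

theorem weight_lt_of_ord_lt {s t : U} (h : 𝒱.ord s < 𝒱.ord t) : 𝒱.weight s < 𝒱.weight t := by
  have hheight := Set.ncard_le_card (Set.Iic s)
  unfold weight
  nlinarith

theorem weight_lt_of_lt {s t : U} (hlt : s < t) (hord : 𝒱.ord s ≤ 𝒱.ord t) :
    𝒱.weight s < 𝒱.weight t := by
  have hheight := Set.ncard_strictMono (Set.Iic_ssubset_Iic.2 hlt)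
  exact Nat.add_lt_add_of_le_of_lt (Nat.mul_le_mul_right _ hord) hheight

end SubmodUniverse

theorem _root_.Finset.sum_insert_erase_lt {ι M : Type*} [DecidableEq ι] [AddCommMonoid M]
    [PartialOrder M] [CanonicallyOrderedAdd M] [IsOrderedCancelAddMonoid M] {f : ι → M}
    {s : Finset ι} {a b : ι} (ha : a ∈ s) (h : f b < f a) :
    ∑ x ∈ insert b (s.erase a), f x < ∑ x ∈ s, f x := by
  calc ∑ x ∈ insert b (s.erase a), f x ≤ f b + ∑ x ∈ s.erase a, f x := by
        by_cases hb : b ∈ s.erase a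
        · rw [Finset.insert_eq_of_mem hb]
          exact le_add_self
        · rw [Finset.sum_insert hb]
    _ < f a + ∑ x ∈ s.erase a, f x := by gcongr
    _ = ∑ x ∈ s, f x := Finset.add_sum_erase s f ha

section SinglingOut

variable {α : Type*} {P : Set α} {𝔓 : Set (Set α)}

def SinglesOut (𝔓 : Set (Set α)) (P σ : Set α) : Prop :=
  σ ⊆ P ∧ ∀ Q ∈ 𝔓, Q ≠ P → ¬ σ ⊆ Q

theorem SinglesOut.insert_erase [DecidableEq α] {σ : Finset α} {t t' : α}
    (hσ : SinglesOut 𝔓 P σ) (ht' : t' ∈ P)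
    (h : ∀ Q ∈ 𝔓, Q ≠ P → ↑(σ.erase t) ⊆ Q → t ∉ Q → t' ∉ Q) :
    SinglesOut 𝔓 P ↑(insert t' (σ.erase t)) := by
  refine ⟨?_, fun Q hQ hQP hsub => ?_⟩
  · rw [Finset.coe_insert]
    exact Set.insert_subset ht' ((Finset.coe_subset.2 (σ.erase_subset t)).trans hσ.1)
  · rw [Finset.coe_insert, Set.insert_subset_iff] at hsub
    by_cases htQ : t ∈ Q
    · refine hσ.2 Q hQ hQP fun x hx => ?_
      by_cases hxt : x = t
      · exact hxt ▸ htQ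
      · exact hsub.2 (Finset.mem_erase.2 ⟨hxt, hx⟩)
    · exact h Q hQ hQP hsub.2 htQ hsub.1

end SinglingOut

theorem singlesOut_self {𝒰 : SepUniverse U} {S P : Set U} {𝔓 : Set (Set U)}
    (h𝔓 : ∀ Q ∈ 𝔓, IsOrientation 𝒰 S Q) (hP : P ∈ 𝔓) : SinglesOut 𝔓 P P :=
  ⟨subset_rfl, fun Q hQ hQP hPQ => hQP ((h𝔓 P hP).eq_of_subset (h𝔓 Q hQ) hPQ).symm⟩

section Lightest

variable {𝒱 : SubmodUniverse U} {k : ℕ} {𝔓 : Set (Set U)} {P : Set U} {σ : Finset U}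

theorem effProp_of_lightest
    (h𝔓 : ∀ Q ∈ 𝔓, IsProfile 𝒱.toSepUniverse (Sk 𝒱 k) Q ∧ Regular 𝒱.toSepUniverse Q)
    (hP : P ∈ 𝔓)
    (hσ : MinimalFor (fun τ : Finset U => SinglesOut 𝔓 P τ) (fun τ => ∑ x ∈ τ, 𝒱.weight x) σ) :
    EffProp 𝒱 σ P := by
  classical
  rintro ⟨t, htσ, t', ht'P, htt', hord⟩
  have htSk : t ∈ Sk 𝒱 k := (h𝔓 P hP).1.1.1 (hσ.prop.1 htσ)
  have hswap : SinglesOut 𝔓 P ↑(insert t' (σ.erase t)) :=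
    hσ.prop.insert_erase ht'P fun Q hQ _ _ htQ ht'Q =>
      htQ ((h𝔓 Q hQ).1.1.mem_of_le (h𝔓 Q hQ).1.2.1 (h𝔓 Q hQ).2 ht'Q htt' htSk)
  exact hσ.not_lt hswap (Finset.sum_insert_erase_lt htσ (𝒱.weight_lt_of_ord_lt hord))

theorem le_inv_of_lightest
    (h𝔓 : ∀ Q ∈ 𝔓, IsProfile 𝒱.toSepUniverse (Sk 𝒱 k) Q ∧ Regular 𝒱.toSepUniverse Q)
    (hP : P ∈ 𝔓)
    (hσ : MinimalFor (fun τ : Finset U => SinglesOut 𝔓 P τ) (fun τ => ∑ x ∈ τ, 𝒱.weight x) σ)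
    {r s : U} (hr : r ∈ σ) (hs : s ∈ σ) (hrs : r ≠ s)
    (hord : 𝒱.ord (s ⊓ 𝒱.inv r) ≤ 𝒱.ord s) : s ≤ 𝒱.inv r := by
  classical
  by_contra hcross
  have hlt : s ⊓ 𝒱.inv r < s := inf_le_left.lt_of_ne fun h => hcross (h ▸ inf_le_right)
  obtain ⟨hPprof, hPreg⟩ := h𝔓 P hP
  have hsSk : s ∈ Sk 𝒱 k := hPprof.1.1 (hσ.prop.1 hs)
  have hcornerP : s ⊓ 𝒱.inv r ∈ P :=
    hPprof.1.mem_of_le hPprof.2.1 hPreg (hσ.prop.1 hs) hlt.le (hord.trans_lt hsSk)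
  have hswap : SinglesOut 𝔓 P ↑(insert (s ⊓ 𝒱.inv r) (σ.erase s)) :=
    hσ.prop.insert_erase hcornerP fun Q hQ _ hsub hsQ =>
      (h𝔓 Q hQ).1.inf_inv_notMem hsSk hsQ (hsub (Finset.mem_erase.2 ⟨hrs, hr⟩))
  exact hσ.not_lt hswap (Finset.sum_insert_erase_lt hs (𝒱.weight_lt_of_lt hlt hord))

theorem isStar_of_lightest
    (h𝔓 : ∀ Q ∈ 𝔓, IsProfile 𝒱.toSepUniverse (Sk 𝒱 k) Q ∧ Regular 𝒱.toSepUniverse Q)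
    (hP : P ∈ 𝔓)
    (hσ : MinimalFor (fun τ : Finset U => SinglesOut 𝔓 P τ) (fun τ => ∑ x ∈ τ, 𝒱.weight x) σ) :
    IsStar 𝒱.toSepUniverse σ := by
  intro r hr s hs hrs
  rcases 𝒱.ord_inf_inv_le_or r s with h | h
  · exact 𝒱.le_inv_comm.1 (le_inv_of_lightest h𝔓 hP hσ hr hs hrs h)
  · exact le_inv_of_lightest h𝔓 hP hσ hs hr hrs.symm h

end Lightest

/-- Every profile `P` in a set `𝔓` of regular profiles of `S_k`
includes a star `σ ⊆ P` with property `Eff(P)` included in no other profile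
in `𝔓` (i.e. a star belonging to `F_e`). -/
theorem profile_star_efficient (𝒱 : SubmodUniverse U) (k : ℕ) (𝔓 : Set (Set U))
    (h𝔓 : ∀ P ∈ 𝔓, IsProfile 𝒱.toSepUniverse (Sk 𝒱 k) P ∧ Regular 𝒱.toSepUniverse P)
    (P : Set U) (hP : P ∈ 𝔓) :
    ∃ σ : Set U, σ ⊆ P ∧ IsStar 𝒱.toSepUniverse σ ∧ EffProp 𝒱 σ P ∧
      ∀ Q ∈ 𝔓, Q ≠ P → ¬ σ ⊆ Q := by
  obtain ⟨σ, hσ⟩ := exists_minimalFor_of_wellFoundedLT (fun σ : Finset U => SinglesOut 𝔓 P σ)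
    (fun σ => ∑ x ∈ σ, 𝒱.weight x)
    ⟨(Set.toFinite P).toFinset, by simpa using singlesOut_self (fun Q hQ => (h𝔓 Q hQ).1.1) hP⟩
  exact ⟨σ, hσ.prop.1, isStar_of_lightest h𝔓 hP hσ, effProp_of_lightest h𝔓 hP hσ, hσ.prop.2⟩

end SepDemo
end

section
/- Let U be a distributive submodular universe, P a profile in U, and 𝒫' a set of strongly robust profiles in U each of which is distinguishable from P. Then there exists a nested set N ⊆ U which distinguishes P efficiently from all the profiles in 𝒫': for every Q ∈ 𝒫' some separation in N efficiently distinguishes P and Q. -/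
namespace SepDemo

variable {U : Type*} [Lattice U] [Fintype U]

/-! ### Auxiliary lemmas for Statement 15 -/

section Aux15

variable {W : Type*} [Lattice W] [Fintype W]

namespace SepUniverse

variable (𝒰 : SepUniverse W)

lemma inv_le_inv' {r s : W} (h : r ≤ s) : 𝒰.inv s ≤ 𝒰.inv r :=
  (𝒰.le_iff r s).mp h

lemma le_inv_comm_s15 {r s : W} : r ≤ 𝒰.inv s ↔ s ≤ 𝒰.inv r := by
  rw [𝒰.le_iff r (𝒰.inv s), 𝒰.inv_inv]

lemma inv_injective {r s : W} (h : 𝒰.inv r = 𝒰.inv s) : r = s := by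
  rw [← 𝒰.inv_inv r, h, 𝒰.inv_inv]

lemma inv_sup' (s t : W) : 𝒰.inv (s ⊔ t) = 𝒰.inv s ⊓ 𝒰.inv t := by
  apply le_antisymm
  · exact le_inf (𝒰.inv_le_inv' le_sup_left) (𝒰.inv_le_inv' le_sup_right)
  · rw [𝒰.le_iff (𝒰.inv s ⊓ 𝒰.inv t) (𝒰.inv (s ⊔ t)), 𝒰.inv_inv]
    exact sup_le (𝒰.le_inv_comm_s15.mpr inf_le_left) (𝒰.le_inv_comm_s15.mpr inf_le_right)

lemma inv_inf' (s t : W) : 𝒰.inv (s ⊓ t) = 𝒰.inv s ⊔ 𝒰.inv t := by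
  apply 𝒰.inv_injective
  rw [𝒰.inv_inv, 𝒰.inv_sup', 𝒰.inv_inv, 𝒰.inv_inv]

end SepUniverse

variable {𝒰 : SepUniverse W}

/-- A profile contains no separation together with its inverse. -/
lemma profile_no_deg {S R : Set W} (hR : IsProfile 𝒰 S R) {x : W} (hx : x ∈ R) :
    𝒰.inv x ∉ R := by
  have := hR.2.2 x hx x hx
  rwa [sup_idem] at this

/-- Consistency in a usable form: if `x, y ∈ R` and `x* ≤ y` then `x = y` or `x = y*`. -/
lemma profile_consist {S R : Set W} (hR : IsProfile 𝒰 S R) {x y : W}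
    (hx : x ∈ R) (hy : y ∈ R) (hxy : 𝒰.inv x ≤ y) : x = y ∨ x = 𝒰.inv y := by
  have hset : ({x, 𝒰.inv x} : Set W) = ({y, 𝒰.inv y} : Set W) := by
    by_contra hne
    exact hR.2.1 x hx y hy hne hxy
  have hmem : x ∈ ({y, 𝒰.inv y} : Set W) := by
    rw [← hset]; exact Set.mem_insert _ _
  simpa using hmem

variable (𝒱 : SubmodUniverse W)

lemma profile_orient {κ : ℕ} {R : Set W} (hR : IsProfile 𝒱.toSepUniverse (Sk 𝒱 κ) R)
    {x : W} (hx : 𝒱.ord x < κ) : x ∈ R ∨ 𝒱.inv x ∈ R :=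
  (hR.1.2 x hx).1

/-- The key nestedness lemma: minimal efficient distinguishers of `P` from
strongly robust profiles are pairwise nested. -/
lemma key_nested {P Q Q' : Set W} {k kQ kQ' : ℕ}
    (hP : IsProfile 𝒱.toSepUniverse (Sk 𝒱 k) P)
    (hQ : IsProfile 𝒱.toSepUniverse (Sk 𝒱 kQ) Q)
    (hQ' : IsProfile 𝒱.toSepUniverse (Sk 𝒱 kQ') Q')
    (hrQ : StronglyRobust 𝒱 Q) (hrQ' : StronglyRobust 𝒱 Q')
    {s t : W}
    (hs : s ∈ P) (hsQ : 𝒱.inv s ∈ Q) (hse : EffDistinguishes 𝒱 s P Q)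
    (hsmin : ∀ y, y ∈ P → 𝒱.inv y ∈ Q → EffDistinguishes 𝒱 y P Q → y ≤ s → y = s)
    (ht : t ∈ P) (htQ : 𝒱.inv t ∈ Q') (hte : EffDistinguishes 𝒱 t P Q')
    (htmin : ∀ y, y ∈ P → 𝒱.inv y ∈ Q' → EffDistinguishes 𝒱 y P Q' → y ≤ t → y = t) :
    Nested 𝒱.toSepUniverse s t := by
  by_contra hN
  unfold Nested at hN
  push_neg at hN
  obtain ⟨h1, h2, h3, h4⟩ := hN
  have hn1 : ¬ t ≤ s := fun h => h4 (𝒱.toSepUniverse.inv_le_inv' h)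
  -- order bounds
  have hmk : 𝒱.ord s < k := hP.1.1 hs
  have hnk : 𝒱.ord t < k := hP.1.1 ht
  have hmkQ : 𝒱.ord s < kQ := by
    have h' : 𝒱.ord (𝒱.inv s) < kQ := hQ.1.1 hsQ
    rwa [𝒱.ord_inv] at h'
  have hnkQ' : 𝒱.ord t < kQ' := by
    have h' : 𝒱.ord (𝒱.inv t) < kQ' := hQ'.1.1 htQ
    rwa [𝒱.ord_inv] at h'
  -- submodularity
  have hsub1 : 𝒱.ord (s ⊔ t) + 𝒱.ord (s ⊓ t) ≤ 𝒱.ord s + 𝒱.ord t := 𝒱.submod s t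
  have hsub2 : 𝒱.ord (s ⊔ 𝒱.inv t) + 𝒱.ord (s ⊓ 𝒱.inv t) ≤ 𝒱.ord s + 𝒱.ord t := by
    have h' := 𝒱.submod s (𝒱.inv t)
    rwa [𝒱.ord_inv] at h'
  -- inv computations
  have einf : 𝒱.inv (s ⊓ 𝒱.inv t) = 𝒱.inv s ⊔ t := by
    rw [𝒱.toSepUniverse.inv_inf', 𝒱.inv_inv]
  have einf' : 𝒱.inv (𝒱.inv s ⊓ t) = s ⊔ 𝒱.inv t := by
    rw [𝒱.toSepUniverse.inv_inf', 𝒱.inv_inv]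
  have ec : 𝒱.ord (𝒱.inv s ⊓ t) = 𝒱.ord (s ⊔ 𝒱.inv t) := by
    rw [← einf', 𝒱.ord_inv]
  -- corners in P
  have hA : 𝒱.ord (s ⊔ t) < k → s ⊔ t ∈ P := fun h =>
    (profile_orient 𝒱 hP h).resolve_right (hP.2.2 s hs t ht)
  have hB : 𝒱.ord (s ⊓ t) < k → s ⊓ t ∈ P := by
    intro h
    rcases profile_orient 𝒱 hP h with h' | h'
    · exact h'
    · exfalso
      have hle : 𝒱.inv (𝒱.inv (s ⊓ t)) ≤ s := by rw [𝒱.inv_inv]; exact inf_le_left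
      rcases profile_consist hP h' hs hle with he | he
      · have h5 : s ⊓ t = 𝒱.inv s := by rw [← 𝒱.inv_inv (s ⊓ t), he]
        exact h3 (h5.symm.le.trans inf_le_right)
      · have h5 : s ⊓ t = s := 𝒱.toSepUniverse.inv_injective he
        exact h1 (h5.symm.le.trans inf_le_right)
  have hC : 𝒱.ord (s ⊓ 𝒱.inv t) < k → s ⊓ 𝒱.inv t ∈ P := by
    intro h
    rcases profile_orient 𝒱 hP h with h' | h'
    · exact h'
    · exfalso
      have hle : 𝒱.inv (𝒱.inv (s ⊓ 𝒱.inv t)) ≤ s := by rw [𝒱.inv_inv]; exact inf_le_left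
      rcases profile_consist hP h' hs hle with he | he
      · have h5 : s ⊓ 𝒱.inv t = 𝒱.inv s := by rw [← 𝒱.inv_inv (s ⊓ 𝒱.inv t), he]
        have h6 : 𝒱.inv s ≤ 𝒱.inv t := h5.symm.le.trans inf_le_right
        exact hn1 ((𝒱.le_iff t s).mpr h6)
      · have h5 : s ⊓ 𝒱.inv t = s := 𝒱.toSepUniverse.inv_injective he
        exact h2 (h5.symm.le.trans inf_le_right)
  have hC' : 𝒱.ord (𝒱.inv s ⊓ t) < k → 𝒱.inv s ⊓ t ∈ P := by
    intro h
    rcases profile_orient 𝒱 hP h with h' | h'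
    · exact h'
    · exfalso
      have hle : 𝒱.inv (𝒱.inv (𝒱.inv s ⊓ t)) ≤ t := by rw [𝒱.inv_inv]; exact inf_le_right
      rcases profile_consist hP h' ht hle with he | he
      · have h5 : 𝒱.inv s ⊓ t = 𝒱.inv t := by rw [← 𝒱.inv_inv (𝒱.inv s ⊓ t), he]
        have h6 : 𝒱.inv t ≤ 𝒱.inv s := h5.symm.le.trans inf_le_left
        exact h1 ((𝒱.le_iff s t).mpr h6)
      · have h5 : 𝒱.inv s ⊓ t = t := 𝒱.toSepUniverse.inv_injective he
        exact h2 (𝒱.toSepUniverse.le_inv_comm_s15.mp (h5.symm.le.trans inf_le_left))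
  -- Q-side orientation of the sup corner
  have hQA : 𝒱.ord (s ⊔ t) < kQ → 𝒱.inv (s ⊔ t) ∈ Q := by
    intro h
    rcases profile_orient 𝒱 hQ h with h' | h'
    · exfalso
      have hle : 𝒱.inv (𝒱.inv s) ≤ s ⊔ t := by rw [𝒱.inv_inv]; exact le_sup_left
      rcases profile_consist hQ hsQ h' hle with he | he
      · exact h2 (𝒱.toSepUniverse.le_inv_comm_s15.mp (le_sup_right.trans he.symm.le))
      · have h5 : s = s ⊔ t := 𝒱.toSepUniverse.inv_injective he
        exact hn1 (le_sup_right.trans h5.symm.le)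
    · exact h'
  have hQ'A : 𝒱.ord (s ⊔ t) < kQ' → 𝒱.inv (s ⊔ t) ∈ Q' := by
    intro h
    rcases profile_orient 𝒱 hQ' h with h' | h'
    · exfalso
      have hle : 𝒱.inv (𝒱.inv t) ≤ s ⊔ t := by rw [𝒱.inv_inv]; exact le_sup_right
      rcases profile_consist hQ' htQ h' hle with he | he
      · exact h2 (le_sup_left.trans he.symm.le)
      · have h5 : t = s ⊔ t := 𝒱.toSepUniverse.inv_injective he
        exact h1 (le_sup_left.trans h5.symm.le)
    · exact h'
  -- main case analysis
  by_cases hd : 𝒱.ord (s ⊓ 𝒱.inv t) ≤ 𝒱.ord s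
  · -- Case I
    have hsdP : s ⊓ 𝒱.inv t ∈ P := hC (lt_of_le_of_lt hd hmk)
    rcases profile_orient 𝒱 hQ (show 𝒱.ord (s ⊓ 𝒱.inv t) < kQ from lt_of_le_of_lt hd hmkQ)
      with hq1 | hq2
    · -- s ⊓ t* ∈ Q : robustness step
      by_cases hb : 𝒱.ord (s ⊓ t) ≤ 𝒱.ord s
      · have hcond1 : 𝒱.ord (𝒱.inv s ⊔ t) ≤ 𝒱.ord (𝒱.inv s) := by
          rw [𝒱.ord_inv, ← einf, 𝒱.ord_inv]; exact hd
        have hcond2 : 𝒱.ord (𝒱.inv s ⊔ 𝒱.inv t) ≤ 𝒱.ord (𝒱.inv s) := by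
          rw [𝒱.ord_inv, ← 𝒱.toSepUniverse.inv_inf', 𝒱.ord_inv]; exact hb
        rcases hrQ (𝒱.inv s) hsQ t hcond1 hcond2 with hr | hr
        · exact profile_no_deg hQ hq1 (by rw [einf]; exact hr)
        · have hst : 𝒱.inv (s ⊓ t) ∈ Q := by rw [𝒱.toSepUniverse.inv_inf']; exact hr
          have hstP : s ⊓ t ∈ P := hB (lt_of_le_of_lt hb hmk)
          have heff : EffDistinguishes 𝒱 (s ⊓ t) P Q :=
            ⟨Or.inl ⟨hstP, hst⟩, fun u hu => hb.trans (hse.2 u hu)⟩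
          have h5 := hsmin _ hstP hst heff inf_le_left
          exact h1 (h5.symm.le.trans inf_le_right)
      · push_neg at hb
        have ha : 𝒱.ord (s ⊔ t) < 𝒱.ord t := by omega
        have haP : s ⊔ t ∈ P := hA (ha.trans hnk)
        have haQ' : 𝒱.inv (s ⊔ t) ∈ Q' := hQ'A (ha.trans hnkQ')
        have h5 := hte.2 _ (Or.inl ⟨haP, haQ'⟩)
        omega
    · -- (s ⊓ t*)* ∈ Q : minimality contradiction
      have heff : EffDistinguishes 𝒱 (s ⊓ 𝒱.inv t) P Q :=
        ⟨Or.inl ⟨hsdP, hq2⟩, fun u hu => hd.trans (hse.2 u hu)⟩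
      have h5 := hsmin _ hsdP hq2 heff inf_le_left
      exact h2 (h5.symm.le.trans inf_le_right)
  · -- Case II
    push_neg at hd
    have hc : 𝒱.ord (s ⊔ 𝒱.inv t) < 𝒱.ord t := by omega
    have hc' : 𝒱.ord (𝒱.inv s ⊓ t) < 𝒱.ord t := by rw [ec]; exact hc
    have hctP : 𝒱.inv s ⊓ t ∈ P := hC' (hc'.trans hnk)
    rcases profile_orient 𝒱 hQ' (show 𝒱.ord (𝒱.inv s ⊓ t) < kQ' from hc'.trans hnkQ')
      with hq1 | hq2
    · -- s* ⊓ t ∈ Q'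
      by_cases hb : 𝒱.ord (s ⊓ t) ≤ 𝒱.ord t
      · have hcond1 : 𝒱.ord (𝒱.inv t ⊔ s) ≤ 𝒱.ord (𝒱.inv t) := by
          rw [𝒱.ord_inv, sup_comm]; exact hc.le
        have hcond2 : 𝒱.ord (𝒱.inv t ⊔ 𝒱.inv s) ≤ 𝒱.ord (𝒱.inv t) := by
          rw [𝒱.ord_inv, ← 𝒱.toSepUniverse.inv_inf', 𝒱.ord_inv, inf_comm]; exact hb
        rcases hrQ' (𝒱.inv t) htQ s hcond1 hcond2 with hr | hr
        · have h5 : 𝒱.inv (𝒱.inv s ⊓ t) ∈ Q' := by rw [einf', sup_comm]; exact hr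
          exact profile_no_deg hQ' hq1 h5
        · have hst : 𝒱.inv (s ⊓ t) ∈ Q' := by
            rw [𝒱.toSepUniverse.inv_inf', sup_comm]; exact hr
          have hstP : s ⊓ t ∈ P := hB (lt_of_le_of_lt hb hnk)
          have heff : EffDistinguishes 𝒱 (s ⊓ t) P Q' :=
            ⟨Or.inl ⟨hstP, hst⟩, fun u hu => hb.trans (hte.2 u hu)⟩
          have h5 := htmin _ hstP hst heff inf_le_right
          exact hn1 (h5.symm.le.trans inf_le_left)
      · push_neg at hb
        have ha : 𝒱.ord (s ⊔ t) < 𝒱.ord s := by omega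
        have haP : s ⊔ t ∈ P := hA (ha.trans hmk)
        have haQ : 𝒱.inv (s ⊔ t) ∈ Q := hQA (ha.trans hmkQ)
        have h5 := hse.2 _ (Or.inl ⟨haP, haQ⟩)
        omega
    · -- (s* ⊓ t)* ∈ Q' : contradicts efficiency of t
      have h5 := hte.2 (𝒱.inv s ⊓ t) (Or.inl ⟨hctP, hq2⟩)
      omega

end Aux15

/-- For a profile `P` in a distributive submodular universe
and a set `𝔓'` of strongly robust profiles each distinguishable from `P`, there
is a nested set `N` distinguishing `P` efficiently from all profiles in `𝔓'`. -/
theorem efficient_star_for_profile {W : Type*} [DistribLattice W] [Fintype W]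
    (𝒱 : SubmodUniverse W) (P : Set W) (hP : ProfileIn 𝒱 P)
    (𝔓' : Set (Set W))
    (h𝔓' : ∀ Q ∈ 𝔓', ProfileIn 𝒱 Q ∧ StronglyRobust 𝒱 Q ∧
      Distinguishable 𝒱.toSepUniverse P Q) :
    ∃ N : Set W, NestedSet 𝒱.toSepUniverse N ∧
      ∀ Q ∈ 𝔓', ∃ s ∈ N, EffDistinguishes 𝒱 s P Q := by
  classical
  obtain ⟨k, hPk⟩ := hP
  refine ⟨{x | ∃ Q ∈ 𝔓', x ∈ P ∧ 𝒱.inv x ∈ Q ∧ EffDistinguishes 𝒱 x P Q ∧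
      ∀ y, y ∈ P → 𝒱.inv y ∈ Q → EffDistinguishes 𝒱 y P Q → y ≤ x → y = x}, ?_, ?_⟩
  · rintro x ⟨Qx, hQx, hx1, hx2, hx3, hx4⟩ y ⟨Qy, hQy, hy1, hy2, hy3, hy4⟩
    obtain ⟨kx, hkx⟩ := (h𝔓' Qx hQx).1
    obtain ⟨ky, hky⟩ := (h𝔓' Qy hQy).1
    exact key_nested 𝒱 hPk hkx hky (h𝔓' Qx hQx).2.1 (h𝔓' Qy hQy).2.1
      hx1 hx2 hx3 hx4 hy1 hy2 hy3 hy4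
  · intro Q hQmem
    obtain ⟨u, hu⟩ := (h𝔓' Q hQmem).2.2
    have hne : ({n | ∃ v, Distinguishes 𝒱.toSepUniverse v P Q ∧ 𝒱.ord v = n} : Set ℕ).Nonempty :=
      ⟨𝒱.ord u, u, hu, rfl⟩
    obtain ⟨v, hv, hvord⟩ := Nat.sInf_mem hne
    have hminord : ∀ w, Distinguishes 𝒱.toSepUniverse w P Q → 𝒱.ord v ≤ 𝒱.ord w := by
      intro w hw
      rw [hvord]
      exact Nat.sInf_le ⟨w, hw, rfl⟩
    have hD : ∃ x, x ∈ P ∧ 𝒱.inv x ∈ Q ∧ EffDistinguishes 𝒱 x P Q := by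
      rcases hv with ⟨hv1, hv2⟩ | ⟨hv1, hv2⟩
      · exact ⟨v, hv1, hv2, Or.inl ⟨hv1, hv2⟩, hminord⟩
      · refine ⟨𝒱.inv v, hv1, ?_, Or.inl ⟨hv1, ?_⟩, ?_⟩
        · rw [𝒱.inv_inv]; exact hv2
        · rw [𝒱.inv_inv]; exact hv2
        · intro w hw
          rw [𝒱.ord_inv]
          exact hminord w hw
    obtain ⟨a, haD, hamin⟩ := Set.Finite.exists_minimal
      (s := {y | y ∈ P ∧ 𝒱.inv y ∈ Q ∧ EffDistinguishes 𝒱 y P Q}) (Set.toFinite _)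
      (by obtain ⟨x, hx⟩ := hD; exact ⟨x, hx⟩)
    exact ⟨a, ⟨Q, hQmem, haD.1, haD.2.1, haD.2.2,
      fun y hy1 hy2 hy3 hle => le_antisymm hle (hamin ⟨hy1, hy2, hy3⟩ hle)⟩, haD.2.2⟩

end SepDemo
end

section
/- Let U be a submodular universe, k ∈ ℕ, and suppose s ∈ S_k is a splice for r ∈ S_k. Then for every t ∈ U with r ≤ t, the order of t ⊔ s is at most the order of t, i.e. |t ⊔ s| ≤ |t|. In particular, s emulates r in S_k. -/
namespace SepDemo

variable {U : Type*} [Lattice U] [Fintype U]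

/-- If `s ∈ S_k` is a splice for `r ∈ S_k` then for every
`t ∈ U` with `r ≤ t` we have `|t ⊔ s| ≤ |t|`; in particular, `s` emulates `r`
in `S_k`. -/
theorem splice_shift (𝒱 : SubmodUniverse U) (k : ℕ) (r s : U)
    (hr : r ∈ Sk 𝒱 k) (hs : s ∈ Sk 𝒱 k) (hsplice : SpliceFor 𝒱 s r) :
    (∀ t : U, r ≤ t → 𝒱.ord (t ⊔ s) ≤ 𝒱.ord t) ∧
      Emulates 𝒱.toSepUniverse (Sk 𝒱 k) s r := by
  obtain ⟨hrs, hmin⟩ := hsplice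
  have key : ∀ t : U, r ≤ t → 𝒱.ord (t ⊔ s) ≤ 𝒱.ord t := by
    intro t hrt
    have hsub := 𝒱.submod t s
    have h1 : 𝒱.ord s ≤ 𝒱.ord (t ⊓ s) := by
      by_contra h
      exact hmin ⟨t ⊓ s, le_inf hrt hrs, inf_le_right, Nat.lt_of_not_le h⟩
    omega
  refine ⟨key, hrs, fun t ht _ hrt => ?_⟩
  exact lt_of_le_of_lt (key t hrt) ht

end SepDemo
end
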